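/- For a right triangle with integer sides a, b, c satisfying a² + b² = c², the exradii rₐ = K/(s − a), r_b = K/(s − b), r_c = K/(s − c) are integers, where K = ab/2 and s = (a+b+c)/2. -/
import Mathlib


/-- For a right triangle with integer sides `a`, `b`, `c` satisfying
`a² + b² = c²`, the exradii `rₐ = K/(s−a)`, `r_b = K/(s−b)`, `r_c = K/(s−c)`,
where `K = a*b/2` and `s = (a+b+c)/2`, are all positive integers. -/
theorem pythagorean_exradii_int (a b c : ℤ) (ha : 0 < a) (hb : 0 < b) (hc : 0 < c)
    (hpyth : a ^ 2 + b ^ 2 = c ^ 2) (s K : ℚ)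
    (hs : s = ((a : ℚ) + b + c) / 2) (hK : K = (a : ℚ) * b / 2) :
    (∃ n : ℤ, 0 < n ∧ (n : ℚ) = K / (s - a)) ∧
    (∃ n : ℤ, 0 < n ∧ (n : ℚ) = K / (s - b)) ∧
    (∃ n : ℤ, 0 < n ∧ (n : ℚ) = K / (s - c)) := by
  have hca : a < c := by nlinarith
  have hcb : b < c := by nlinarith
  have he : Even (a + b + c) := by
    have h2 : Even ((a + b + c) ^ 2) :=
      ⟨c ^ 2 + a * b + a * c + b * c, by linear_combination hpyth⟩
    exact (Int.even_pow.mp h2).1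
  obtain ⟨t, ht⟩ := he
  have htQ : (a : ℚ) + b + c = t + t := by exact_mod_cast ht
  have hpQ : (a : ℚ) ^ 2 + (b : ℚ) ^ 2 = (c : ℚ) ^ 2 := by exact_mod_cast hpyth
  have hsa : (0 : ℚ) < s - a := by
    rw [hs]
    have : (a : ℚ) < c := by exact_mod_cast hca
    have hbq : (0 : ℚ) < b := by exact_mod_cast hb
    linarith
  have hsb : (0 : ℚ) < s - b := by
    rw [hs]
    have : (b : ℚ) < c := by exact_mod_cast hcb
    have haq : (0 : ℚ) < a := by exact_mod_cast ha
    linarith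
  have hsc : (0 : ℚ) < s - c := by
    rw [hs]
    have h1 : c < a + b := by nlinarith
    have : (c : ℚ) < a + b := by exact_mod_cast h1
    linarith
  have hcq : (c : ℚ) = 2 * t - a - b := by linarith
  have hp' : (a : ℚ) ^ 2 + (b : ℚ) ^ 2 = (2 * (t:ℚ) - a - b) ^ 2 := by
    rw [← hcq]; exact hpQ
  refine ⟨⟨t - b, by omega, ?_⟩, ⟨t - a, by omega, ?_⟩, ⟨t, by omega, ?_⟩⟩
  · rw [eq_div_iff hsa.ne', hs, hK]
    push_cast
    rw [hcq]
    linear_combination (-(1:ℚ)/4) * hp'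
  · rw [eq_div_iff hsb.ne', hs, hK]
    push_cast
    rw [hcq]
    linear_combination (-(1:ℚ)/4) * hp'
  · rw [eq_div_iff hsc.ne', hs, hK]
    push_cast
    rw [hcq]
    linear_combination ((1:ℚ)/4) * hp'
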